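/- For every d ≥ 1 and L ≥ 1 there exist m₀, t₀ ∈ ℕ such that for every η > 0 there exist ε > 0 and N₀ with the following property for all N ≥ N₀. Let ν : ZMod N → ℝ be nonnegative and satisfy the (m₀,t₀,L,ε)-linear forms condition, let {ν_I} be an independent weight system on (ZMod N)^{d+1} built from ν with coefficient bound L, and let J ⊆ {1,…,d+1} with |J| = d. Then ‖ν_J − 1‖_{□,ν} ≤ η, where the weighted box norm on functions (ZMod N)^J → ℝ is the one determined by the weights ν_I, I ⊊ J. -/

import Mathlib

noncomputable section
open Finset

/-- `P_ω(x,y)`: the point whose `i`-th coordinate is `x i` if `ω i = false` and `y i` otherwise. -/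
def proj {ι : Type*} {N : ℕ} (ω : ι → Bool) (x y : ι → ZMod N) : ι → ZMod N :=
  fun i => if ω i then y i else x i

/-- `P_{ω_I}(x_I, y_I)` as a function on the subtype `↥I`. -/
def projI {ι : Type*} {N : ℕ} {I : Finset ι} (ω : I → Bool) (x y : ι → ZMod N) :
    I → ZMod N :=
  fun i => if ω i then y i.1 else x i.1

/-- The product of the weights `ν_I(P_{ω_I}(x_I,y_I))` over proper subsets `I ⊊ ι`
and all `ω_I ∈ {0,1}^I`. -/
def weightProd {ι : Type*} [Fintype ι] [DecidableEq ι] {N : ℕ}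
    (ν : (I : Finset ι) → (I → ZMod N) → ℝ) (x y : ι → ZMod N) : ℝ :=
  ∏ I ∈ univ.filter (fun I : Finset ι => I ≠ univ), ∏ ω : I → Bool, ν I (projI ω x y)

/-- The weighted Gowers inner product `⟨(f_ω)⟩_{□,ν}`. -/
def gowersInner {ι : Type*} [Fintype ι] [DecidableEq ι] {N : ℕ} [NeZero N]
    (ν : (I : Finset ι) → (I → ZMod N) → ℝ)
    (f : (ι → Bool) → (ι → ZMod N) → ℝ) : ℝ :=
  Finset.expect Finset.univ fun x : ι → ZMod N =>
    Finset.expect Finset.univ fun y : ι → ZMod N =>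
      (∏ ω : ι → Bool, f ω (proj ω x y)) * weightProd ν x y

/-- The weighted box norm `‖f‖_{□,ν}`. -/
def boxNorm {ι : Type*} [Fintype ι] [DecidableEq ι] {N : ℕ} [NeZero N]
    (ν : (I : Finset ι) → (I → ZMod N) → ℝ) (f : (ι → ZMod N) → ℝ) : ℝ :=
  gowersInner ν (fun _ => f) ^ (((2 : ℝ) ^ (Fintype.card ι))⁻¹)


/-- The `(m₀,t₀,L,ε)`-linear forms condition for `ν : ZMod N → ℝ`. -/
def LinearFormsCondition (N : ℕ) [NeZero N] (ν : ZMod N → ℝ) (m₀ t₀ L : ℕ) (ε : ℝ) : Prop :=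
  ∀ m t : ℕ, 1 ≤ m → m ≤ m₀ → 1 ≤ t → t ≤ t₀ →
    ∀ (a : Fin m → Fin t → ℤ) (b : Fin m → ZMod N),
      (∀ i, a i ≠ 0) →
      (∀ i j, |a i j| ≤ (L : ℤ)) →
      (∀ i i', i ≠ i' → ¬ ∃ q : ℚ, ∀ j, (a i j : ℚ) = q * (a i' j : ℚ)) →
      |Finset.expect Finset.univ (fun x : Fin t → ZMod N =>
        ∏ i, ν ((∑ j, (a i j : ZMod N) * x j) + b i)) - 1| ≤ ε

/-- Extend a coefficient vector on `I` by zero to all of `Fin n`. -/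
def extCoeff {n : ℕ} (I : Finset (Fin n)) (c : I → ℤ) : Fin n → ℤ :=
  fun i => if h : i ∈ I then c ⟨i, h⟩ else 0

/-- An independent weight system on `(ZMod N)^{d+1}` built from `ν` with coefficient bound `L`:
for each `I` with `|I| ≤ d`, `ν_I` is a (possibly empty, hence identically `1`) product
`∏_j ν(L_I^j(x_I))` of `ν` evaluated at affine-linear forms whose integer coefficients are
nonzero in every coordinate of `I` and bounded by `L`, and any two distinct forms occurring in
the system have linear parts that are non-proportional over `ℚ`. -/
def IsIndepWeightSystem {N : ℕ} [NeZero N] (d L : ℕ) (ν : ZMod N → ℝ)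
    (νI : (I : Finset (Fin (d + 1))) → (I → ZMod N) → ℝ) : Prop :=
  ∃ (K : Finset (Fin (d + 1)) → ℕ)
    (c : (I : Finset (Fin (d + 1))) → ℕ → (I → ℤ))
    (b : Finset (Fin (d + 1)) → ℕ → ZMod N),
    (∀ I : Finset (Fin (d + 1)), I.card ≤ d →
      νI I = fun x => ∏ j ∈ Finset.range (K I),
        ν ((∑ i : I, (c I j i : ZMod N) * x i) + b I j)) ∧
    (∀ I : Finset (Fin (d + 1)), I.card ≤ d → ∀ j < K I, ∀ i : I,
      c I j i ≠ 0 ∧ |c I j i| ≤ (L : ℤ)) ∧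
    (∀ I I' : Finset (Fin (d + 1)), I.card ≤ d → I'.card ≤ d →
      ∀ j < K I, ∀ j' < K I', (I, j) ≠ (I', j') →
      ¬ ∃ q : ℚ, ∀ i : Fin (d + 1),
        (extCoeff I (c I j) i : ℚ) = q * (extCoeff I' (c I' j') i : ℚ))

/-- Restrict a weight system indexed by subsets of `Fin n` to a weight system indexed by
subsets of `↥J`, for `J : Finset (Fin n)`. -/
def restrictWeights {n N : ℕ}
    (νI : (I : Finset (Fin n)) → (I → ZMod N) → ℝ) (J : Finset (Fin n)) :
    (I : Finset J) → (I → ZMod N) → ℝ :=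
  fun I x => νI (I.map (Function.Embedding.subtype _))
    (fun j => x ⟨⟨j.1, Finset.property_of_mem_map_subtype I j.2⟩, by
      obtain ⟨a, ha, hav⟩ := Finset.mem_map.mp j.2
      have : a = ⟨j.1, Finset.property_of_mem_map_subtype I j.2⟩ :=
        Subtype.ext (by simpa using hav)
      exact this ▸ ha⟩)

/-- The multilinear form `Λ(f^{(1)},…,f^{(d+1)})`. -/
def LambdaForm {d N : ℕ} [NeZero N]
    (νI : (I : Finset (Fin (d + 1))) → (I → ZMod N) → ℝ)
    (f : (i : Fin (d + 1)) → (↥(univ.erase i) → ZMod N) → ℝ) : ℝ :=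
  Finset.expect Finset.univ fun x : Fin (d + 1) → ZMod N =>
    (∏ i : Fin (d + 1), f i (fun j => x j.1)) *
      ∏ I ∈ univ.filter (fun I : Finset (Fin (d + 1)) => I.card < d), νI I (fun j => x j.1)


/-!
Expanding `∏_ω (ν_J(P_ω(x,y)) - 1)` writes `‖ν_J - 1‖_{□,ν}^{2^d}` as an alternating sum, over
`S ⊆ {0,1}^J`, of weighted Gowers inner products with `ν_J` at the vertices in `S` and `1`
elsewhere. Each of these is an average over `(x, y) ∈ (ZMod N)^{2d}` of a product of `ν` along the
forms `L_I^j(P_ω(x_I, y_I))`. Such a lifted form remembers `I` as its support and `ω` as the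
position of its nonzero entries, so lifts of non-proportional forms stay non-proportional, and the
linear forms condition makes every term `1 + O(ε)`; the alternating sum of the `1`s vanishes.
There are at most `(2L+1)^{d+1}` forms per `I`, hence at most `4^d (2L+1)^{d+1}` forms in all.
-/
open scoped BigOperators

section BoxNorm

variable {ι : Type*} [Fintype ι] [DecidableEq ι] {N : ℕ} [NeZero N]

theorem gowersInner_sub_one_eq_sum (ν : (I : Finset ι) → (I → ZMod N) → ℝ)
    (g : (ι → ZMod N) → ℝ) :
    gowersInner ν (fun _ z => g z - 1) =
      ∑ S : Finset (ι → Bool),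
        (-1) ^ #Sᶜ * gowersInner ν (fun ω z => if ω ∈ S then g z else 1) := by
  have hprod : ∀ x y : ι → ZMod N, ∏ ω, (g (proj ω x y) - 1) =
      ∑ S : Finset (ι → Bool), (-1) ^ #Sᶜ * ∏ ω, if ω ∈ S then g (proj ω x y) else 1 := by
    intro x y
    simp only [sub_eq_add_neg, Fintype.prod_add, prod_const, prod_ite_mem, univ_inter]
    exact sum_congr rfl fun S _ => mul_comm _ _
  simp only [gowersInner, hprod, sum_mul, expect_sum_comm, mul_assoc, ← mul_expect]

theorem sum_neg_one_pow_card_compl {α : Type*} [Fintype α] [DecidableEq α] [Nonempty α] :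
    ∑ S : Finset α, (-1 : ℝ) ^ #Sᶜ = 0 := by
  rw [Fintype.sum_equiv (Equiv.mk compl compl compl_compl compl_compl)
    (fun S : Finset α => (-1 : ℝ) ^ #Sᶜ) (fun S => (-1 : ℝ) ^ #S) fun _ => rfl, ← powerset_univ]
  exact_mod_cast sum_powerset_neg_one_pow_card_of_nonempty (univ_nonempty (α := α))

theorem rpow_inv_two_pow_le {a η : ℝ} {k : ℕ} (hη : 0 ≤ η) (h : |a| ≤ η ^ 2 ^ k) :
    a ^ ((2 : ℝ) ^ k)⁻¹ ≤ η :=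
  calc a ^ ((2 : ℝ) ^ k)⁻¹ ≤ |a| ^ ((2 : ℝ) ^ k)⁻¹ :=
        (le_abs_self _).trans (Real.abs_rpow_le_abs_rpow _ _)
    _ ≤ (η ^ 2 ^ k) ^ (((2 ^ k : ℕ) : ℝ))⁻¹ := by
        push_cast; exact Real.rpow_le_rpow (abs_nonneg _) h (by positivity)
    _ = η := Real.pow_rpow_inv_natCast hη (by positivity)

theorem boxNorm_sub_one_le (ν : (I : Finset ι) → (I → ZMod N) → ℝ) (g : (ι → ZMod N) → ℝ)
    {η : ℝ} (hη : 0 ≤ η)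
    (h : ∀ S : Finset (ι → Bool), |gowersInner ν (fun ω z => if ω ∈ S then g z else 1) - 1| ≤
      η ^ 2 ^ Fintype.card ι / 2 ^ 2 ^ Fintype.card ι) :
    boxNorm ν (fun z => g z - 1) ≤ η := by
  refine rpow_inv_two_pow_le hη ?_
  have hsum : gowersInner ν (fun _ z => g z - 1) = ∑ S : Finset (ι → Bool),
      (-1) ^ #Sᶜ * (gowersInner ν (fun ω z => if ω ∈ S then g z else 1) - 1) := by
    simp only [gowersInner_sub_one_eq_sum, mul_sub, mul_one, sum_sub_distrib,
      sum_neg_one_pow_card_compl, sub_zero]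
  calc |gowersInner ν (fun _ z => g z - 1)|
      ≤ ∑ S : Finset (ι → Bool),
          |gowersInner ν (fun ω z => if ω ∈ S then g z else 1) - 1| := by
        rw [hsum]
        refine (abs_sum_le_sum_abs _ _).trans_eq (sum_congr rfl fun S _ => ?_)
        simp [abs_mul]
    _ ≤ ∑ _S : Finset (ι → Bool), η ^ 2 ^ Fintype.card ι / 2 ^ 2 ^ Fintype.card ι :=
        sum_le_sum fun S _ => h S
    _ = η ^ 2 ^ Fintype.card ι := by
        rw [sum_const, card_univ, Fintype.card_finset, Fintype.card_fun, Fintype.card_bool,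
          nsmul_eq_mul]
        push_cast
        field_simp

end BoxNorm

theorem LinearFormsCondition.abs_expect_prod_sub_one_le {N : ℕ} [NeZero N] {ν : ZMod N → ℝ}
    {m₀ t₀ L : ℕ} {ε : ℝ} (hν : LinearFormsCondition N ν m₀ t₀ L ε) (hε : 0 ≤ ε)
    {α β : Type*} [Fintype α] [DecidableEq α] {F : Finset β} (a : β → α → ℤ) (b : β → ZMod N)
    (hF : #F ≤ m₀) (hα : 1 ≤ Fintype.card α) (hα' : Fintype.card α ≤ t₀)
    (hnz : ∀ f ∈ F, a f ≠ 0) (hbd : ∀ f ∈ F, ∀ i, |a f i| ≤ L)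
    (hnp : ∀ f ∈ F, ∀ f' ∈ F, f ≠ f' → ¬∃ q : ℚ, ∀ i, (a f i : ℚ) = q * a f' i) :
    |𝔼 w : α → ZMod N, ∏ f ∈ F, ν (∑ i, (a f i : ZMod N) * w i + b f) - 1| ≤ ε := by
  obtain rfl | hFne := F.eq_empty_or_nonempty
  · simpa [expect_const univ_nonempty] using hε
  set eα := Fintype.equivFin α
  set eF := F.equivFin
  have key := hν #F (Fintype.card α) (card_pos.2 hFne) hF hα hα'
    (fun k l => a (eF.symm k) (eα.symm l)) (fun k => b (eF.symm k))
    (fun k h => hnz _ (eF.symm k).2 (funext fun i => by simpa using congr_fun h (eα i)))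
    (fun k l => hbd _ (eF.symm k).2 _)
    (fun k k' hkk ⟨q, hq⟩ => hnp _ (eF.symm k).2 _ (eF.symm k').2
      (fun h => hkk (eF.symm.injective (Subtype.ext h))) ⟨q, fun i => by simpa using hq (eα i)⟩)
  convert key using 3
  refine Fintype.expect_equiv (eα.arrowCongr (Equiv.refl _)) _ _ fun w => ?_
  rw [← prod_coe_sort F]
  refine Fintype.prod_equiv eF _ _ fun f => ?_
  simp only [Equiv.symm_apply_apply]
  congr 2
  exact (Fintype.sum_equiv eα _ _ fun i => by simp [Equiv.arrowCongr_apply])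

section LiftedForms

variable {ι : Type*} {k : Finset ι → ℕ} {v : Finset ι → ℕ → ι → ℤ}

def pairVars {M : Type*} (x y : ι → M) : ι × Bool → M := fun p => if p.2 then y p.1 else x p.1

theorem expect_expect_pairVars [Fintype ι] [DecidableEq ι] {M : Type*} [Fintype M]
    (G : (ι × Bool → M) → ℝ) :
    𝔼 x : ι → M, 𝔼 y : ι → M, G (pairVars x y) = 𝔼 w, G w := by
  rw [← expect_product', univ_product_univ]
  refine Fintype.expect_bijective (fun p => pairVars p.1 p.2) ?_ _ _ fun _ => rfl
  refine Function.bijective_iff_has_inverse.2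
    ⟨fun w => (fun i => w (i, false), fun i => w (i, true)), fun p => ?_, fun w => ?_⟩
  · ext i <;> rfl
  · funext ⟨i, b⟩
    cases b <;> rfl

def liftCoeff (ω : ι → Bool) (a : ι → ℤ) : ι × Bool → ℤ :=
  fun p => if ω p.1 = p.2 then a p.1 else 0

@[simp]
theorem liftCoeff_apply_self (ω : ι → Bool) (a : ι → ℤ) (i : ι) :
    liftCoeff ω a (i, ω i) = a i := if_pos rfl

theorem sum_liftCoeff_mul_pairVars [Fintype ι] {N : ℕ} (ω : ι → Bool) (a : ι → ℤ)
    (x y : ι → ZMod N) :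
    ∑ p, (liftCoeff ω a p : ZMod N) * pairVars x y p = ∑ i, (a i : ZMod N) * proj ω x y i := by
  rw [Fintype.sum_prod_type]
  refine sum_congr rfl fun i _ => ?_
  cases h : ω i <;> simp [liftCoeff, pairVars, proj, h]

theorem liftCoeff_ne_zero {ω : ι → Bool} {a : ι → ℤ} (ha : a ≠ 0) : liftCoeff ω a ≠ 0 := by
  obtain ⟨i, hi⟩ := Function.ne_iff.1 ha
  exact Function.ne_iff.2 ⟨(i, ω i), by simpa using hi⟩

theorem abs_liftCoeff_le {ω : ι → Bool} {a : ι → ℤ} {L : ℤ} (ha : ∀ i, |a i| ≤ L) (hL : 0 ≤ L)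
    (p : ι × Bool) : |liftCoeff ω a p| ≤ L := by
  unfold liftCoeff
  split_ifs
  exacts [ha _, by simpa using hL]

theorem ne_zero_and_eq_of_liftCoeff_eq_mul {ω ω' : ι → Bool} {a a' : ι → ℤ} {q : ℚ}
    (h : ∀ p, (liftCoeff ω a p : ℚ) = q * liftCoeff ω' a' p) {i : ι} (hi : a i ≠ 0) :
    a' i ≠ 0 ∧ ω' i = ω i := by
  have := h (i, ω i)
  rw [liftCoeff_apply_self, liftCoeff] at this
  split_ifs at this with hω
  · exact ⟨fun h0 => hi (by simpa [h0] using this), hω⟩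
  · exact absurd (by simpa using this) hi

theorem ne_zero_of_lt_of_support (hk : k ∅ = 0)
    (hsupp : ∀ I, ∀ j < k I, ∀ i, v I j i ≠ 0 ↔ i ∈ I) {I : Finset ι} {j : ℕ} (hj : j < k I) :
    v I j ≠ 0 := by
  obtain ⟨i, hi⟩ : I.Nonempty := nonempty_iff_ne_empty.2 fun h => by subst h; omega
  exact fun h => (hsupp I j hj i).2 hi (congr_fun h i)

variable [DecidableEq ι]

def extendFalse {I : Finset ι} (ω₀ : I → Bool) : ι → Bool :=
  fun i => if h : i ∈ I then ω₀ ⟨i, h⟩ else false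

@[simp]
theorem extendFalse_coe {I : Finset ι} (ω₀ : I → Bool) (i : I) : extendFalse ω₀ i = ω₀ i :=
  dif_pos i.2

theorem extendFalse_of_notMem {I : Finset ι} (ω₀ : I → Bool) {i : ι} (hi : i ∉ I) :
    extendFalse ω₀ i = false :=
  dif_neg hi

theorem extendFalse_injective (I : Finset ι) : Function.Injective (extendFalse (I := I)) :=
  fun ω₀ ω₀' h => funext fun i => by simpa using congr_fun h i

theorem projI_eq_proj_extendFalse {N : ℕ} {I : Finset ι} (ω₀ : I → Bool) (x y : ι → ZMod N) :
    projI ω₀ x y = fun i : I => proj (extendFalse ω₀) x y i := by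
  funext i
  simp [projI, proj]

variable [Fintype ι]

/-- In the Gowers inner product of `ω ↦ if ω ∈ S then g else 1`, `(univ, ω)` stands for the
factor `g ∘ P_ω` (`ω ∈ S`) and `(I, extendFalse ω₀)` for the weight `ν_I ∘ P_{ω₀}` (`I ≠ univ`). -/
def patterns (S : Finset (ι → Bool)) : Finset (Finset ι × (ι → Bool)) :=
  S.image (fun ω => (univ, ω)) ∪
    (univ.filter (· ≠ univ)).biUnion fun I => univ.image fun ω₀ : I → Bool => (I, extendFalse ω₀)

theorem prod_patterns {M : Type*} [CommMonoid M] (S : Finset (ι → Bool))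
    (h : Finset ι × (ι → Bool) → M) :
    ∏ p ∈ patterns S, h p = (∏ ω ∈ S, h (univ, ω)) *
      ∏ I ∈ univ.filter (· ≠ univ), ∏ ω₀ : I → Bool, h (I, extendFalse ω₀) := by
  rw [patterns, prod_union, prod_image fun _ _ _ _ h => (Prod.ext_iff.1 h).2, prod_biUnion]
  · congr 1
    refine prod_congr rfl fun I _ => prod_image fun _ _ _ _ h => ?_
    exact extendFalse_injective I (Prod.ext_iff.1 h).2
  · intro I _ I' _ hII'
    simp only [Function.onFun, disjoint_left, mem_image]
    rintro _ ⟨_, _, rfl⟩ ⟨_, _, h⟩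
    exact hII' (Prod.ext_iff.1 h).1.symm
  · simp only [disjoint_left, mem_image, mem_biUnion, mem_filter]
    rintro _ ⟨_, _, rfl⟩ ⟨I, ⟨_, hI⟩, _, _, h⟩
    exact hI (Prod.ext_iff.1 h).1

theorem apply_eq_false_of_mem_patterns {S : Finset (ι → Bool)} {p : Finset ι × (ι → Bool)}
    (hp : p ∈ patterns S) {i : ι} (hi : i ∉ p.1) : p.2 i = false := by
  simp only [patterns, mem_union, mem_image, mem_biUnion] at hp
  rcases hp with ⟨_, _, rfl⟩ | ⟨I, _, ω₀, _, rfl⟩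
  · exact absurd (mem_univ i) hi
  · exact extendFalse_of_notMem ω₀ hi

theorem card_patterns_le (S : Finset (ι → Bool)) : #(patterns S) ≤ 4 ^ Fintype.card ι := by
  refine (card_le_univ _).trans_eq ?_
  simp [Fintype.card_finset, ← mul_pow]

/-- `⟨(I, ω), j⟩` stands for the form `(x, y) ↦ ∑ᵢ v I j i * P_ω(x, y)ᵢ`, whose coefficients in
the variables `pairVars x y` are `liftCoeff ω (v I j)`. -/
def forms (k : Finset ι → ℕ) (S : Finset (ι → Bool)) :
    Finset (Σ _ : Finset ι × (ι → Bool), ℕ) :=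
  (patterns S).sigma fun p => range (k p.1)

theorem card_forms_le {k : Finset ι → ℕ} {B : ℕ} (hk : ∀ I, k I ≤ B) (S : Finset (ι → Bool)) :
    #(forms k S) ≤ 4 ^ Fintype.card ι * B := by
  rw [forms, card_sigma]
  refine (sum_le_card_nsmul _ _ B fun p _ => by simpa using hk p.1).trans ?_
  rw [smul_eq_mul]
  exact Nat.mul_le_mul_right B (card_patterns_le S)

theorem not_proportional_of_mem_forms (hk : k ∅ = 0)
    (hsupp : ∀ I, ∀ j < k I, ∀ i, v I j i ≠ 0 ↔ i ∈ I)
    (hnp : ∀ I, ∀ j < k I, ∀ j' < k I, j ≠ j' →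
      ¬∃ q : ℚ, ∀ i, (v I j i : ℚ) = q * v I j' i)
    {S : Finset (ι → Bool)} {f f' : Σ _ : Finset ι × (ι → Bool), ℕ}
    (hf : f ∈ forms k S) (hf' : f' ∈ forms k S) (hne : f ≠ f') :
    ¬∃ q : ℚ, ∀ p, (liftCoeff f.1.2 (v f.1.1 f.2) p : ℚ) =
      q * liftCoeff f'.1.2 (v f'.1.1 f'.2) p := by
  obtain ⟨⟨I, ω⟩, j⟩ := f
  obtain ⟨⟨I', ω'⟩, j'⟩ := f'
  simp only [forms, mem_sigma, mem_range] at hf hf'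
  rintro ⟨q, hq⟩
  have hq0 : q ≠ 0 := by
    rintro rfl
    exact liftCoeff_ne_zero (ne_zero_of_lt_of_support hk hsupp hf.2)
      (funext fun p => by simpa using hq p)
  have hq' : ∀ p, (liftCoeff ω' (v I' j') p : ℚ) = q⁻¹ * liftCoeff ω (v I j) p := fun p => by
    rw [hq p, inv_mul_cancel_left₀ hq0]
  have hsub : ∀ i ∈ I, i ∈ I' ∧ ω' i = ω i := fun i hi => by
    obtain ⟨h1, h2⟩ := ne_zero_and_eq_of_liftCoeff_eq_mul hq ((hsupp I j hf.2 i).2 hi)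
    exact ⟨(hsupp I' j' hf'.2 i).1 h1, h2⟩
  have hsub' : ∀ i ∈ I', i ∈ I := fun i hi =>
    (hsupp I j hf.2 i).1 (ne_zero_and_eq_of_liftCoeff_eq_mul hq' ((hsupp I' j' hf'.2 i).2 hi)).1
  obtain rfl : I = I' := Finset.ext fun i => ⟨fun hi => (hsub i hi).1, hsub' i⟩
  obtain rfl : ω = ω' := funext fun i => by
    by_cases hi : i ∈ I
    · exact (hsub i hi).2.symm
    · exact (apply_eq_false_of_mem_patterns hf.1 hi).trans
        (apply_eq_false_of_mem_patterns hf'.1 hi).symm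
  refine hnp I j hf.2 j' hf'.2 (fun h => hne (h ▸ rfl)) ⟨q, fun i => ?_⟩
  by_cases hi : i ∈ I
  · simpa using hq (i, ω i)
  · have h0 : ∀ j < k I, v I j i = 0 := fun j hj => not_not.1 fun h => hi ((hsupp I j hj i).1 h)
    simp [h0 j hf.2, h0 j' hf'.2]

theorem gowersInner_eq_expect_prod_forms {N : ℕ} [NeZero N] (ν : ZMod N → ℝ)
    (νw : (I : Finset ι) → (I → ZMod N) → ℝ) (β : Finset ι → ℕ → ZMod N)
    (hνw : ∀ I (z : ι → ZMod N),
      νw I (fun i => z i) = ∏ j ∈ range (k I), ν (∑ i, (v I j i : ZMod N) * z i + β I j))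
    (g : (ι → ZMod N) → ℝ) (hg : ∀ z, g z = νw univ (fun i => z i)) (S : Finset (ι → Bool)) :
    gowersInner νw (fun ω z => if ω ∈ S then g z else 1) =
      𝔼 w : ι × Bool → ZMod N, ∏ f ∈ forms k S,
        ν (∑ p, (liftCoeff f.1.2 (v f.1.1 f.2) p : ZMod N) * w p + β f.1.1 f.2) := by
  rw [gowersInner, ← expect_expect_pairVars]
  refine expect_congr rfl fun x _ => expect_congr rfl fun y _ => ?_
  simp only [forms, prod_sigma, prod_patterns, sum_liftCoeff_mul_pairVars, prod_ite_mem,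
    univ_inter, weightProd, hg, hνw, projI_eq_proj_extendFalse]

theorem abs_gowersInner_sub_one_le_of_linearFormsCondition [Nonempty ι] {N : ℕ} [NeZero N]
    {ν : ZMod N → ℝ} {m₀ t₀ L B : ℕ} {ε : ℝ} (hν : LinearFormsCondition N ν m₀ t₀ L ε)
    (hε : 0 ≤ ε) (hm : 4 ^ Fintype.card ι * B ≤ m₀) (ht : 2 * Fintype.card ι ≤ t₀)
    (νw : (I : Finset ι) → (I → ZMod N) → ℝ) (β : Finset ι → ℕ → ZMod N)
    (hνw : ∀ I (z : ι → ZMod N),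
      νw I (fun i => z i) = ∏ j ∈ range (k I), ν (∑ i, (v I j i : ZMod N) * z i + β I j))
    (g : (ι → ZMod N) → ℝ) (hg : ∀ z, g z = νw univ (fun i => z i))
    (hk : k ∅ = 0) (hB : ∀ I, k I ≤ B)
    (hsupp : ∀ I, ∀ j < k I, ∀ i, v I j i ≠ 0 ↔ i ∈ I)
    (hbd : ∀ I, ∀ j < k I, ∀ i, |v I j i| ≤ L)
    (hnp : ∀ I, ∀ j < k I, ∀ j' < k I, j ≠ j' →
      ¬∃ q : ℚ, ∀ i, (v I j i : ℚ) = q * v I j' i)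
    (S : Finset (ι → Bool)) :
    |gowersInner νw (fun ω z => if ω ∈ S then g z else 1) - 1| ≤ ε := by
  rw [gowersInner_eq_expect_prod_forms ν νw β hνw g hg S]
  have hcard : Fintype.card (ι × Bool) = 2 * Fintype.card ι := by
    rw [Fintype.card_prod, Fintype.card_bool, mul_comm]
  refine hν.abs_expect_prod_sub_one_le hε _ _ ((card_forms_le hB S).trans hm)
    (by rw [hcard]; have := Fintype.card_pos (α := ι); omega) (hcard ▸ ht)
    (fun f hf => ?_) (fun f hf => ?_)
    fun f hf f' hf' => not_proportional_of_mem_forms hk hsupp hnp hf hf'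
  all_goals obtain ⟨-, hj⟩ : f.1 ∈ patterns S ∧ f.2 < k f.1.1 := by simpa [forms] using hf
  · exact liftCoeff_ne_zero (ne_zero_of_lt_of_support hk hsupp hj)
  · exact abs_liftCoeff_le (hbd _ _ hj) (Nat.cast_nonneg L)

end LiftedForms

section WeightSystem

open Function

theorem le_two_mul_add_one_pow_of_injOn {m K L : ℕ} {g : ℕ → Fin m → ℤ}
    (hg : Set.InjOn g (range K)) (hbd : ∀ j < K, ∀ i, |g j i| ≤ L) : K ≤ (2 * L + 1) ^ m := by
  calc K = #((range K).image g) := by rw [card_image_of_injOn hg, card_range]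
    _ ≤ #(Fintype.piFinset fun _ : Fin m => Icc (-(L : ℤ)) L) := by
        refine card_le_card fun f hf => ?_
        obtain ⟨j, hj, rfl⟩ := mem_image.1 hf
        simpa [Fintype.mem_piFinset, ← abs_le] using hbd j (mem_range.1 hj)
    _ = (2 * L + 1) ^ m := by
        simp only [Fintype.card_piFinset, Int.card_Icc, prod_const, card_univ, Fintype.card_fin]
        congr 1; omega

variable {n N : ℕ}

theorem abs_extCoeff_le {I : Finset (Fin n)} {a : I → ℤ} {L : ℤ} (ha : ∀ i, |a i| ≤ L)
    (hL : 0 ≤ L) (i : Fin n) : |extCoeff I a i| ≤ L := by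
  unfold extCoeff
  split_ifs
  exacts [ha _, by simpa using hL]

theorem sum_extCoeff_mul {R : Type*} [CommRing R] {I J : Finset (Fin n)} (hIJ : I ⊆ J)
    (a : I → ℤ) (z : J → R) :
    ∑ i : J, (extCoeff I a i : R) * z i = ∑ i : I, (a i : R) * z ⟨i, hIJ i.2⟩ := by
  symm
  refine Fintype.sum_of_injective (fun i : I => (⟨i, hIJ i.2⟩ : J))
    (fun i i' h => Subtype.ext (congrArg Subtype.val h :)) _ _ (fun i hi => ?_) fun i => ?_
  · rw [extCoeff, dif_neg fun h => hi ⟨⟨i, h⟩, rfl⟩, Int.cast_zero, zero_mul]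
  · rw [extCoeff, dif_pos i.2]

theorem map_subtype_subset' {J : Finset (Fin n)} (I : Finset J) :
    I.map (Embedding.subtype _) ⊆ J :=
  fun _ hx => property_of_mem_map_subtype I hx

def restrictCoeff (c : (I : Finset (Fin n)) → ℕ → I → ℤ) (J : Finset (Fin n)) (I : Finset J)
    (j : ℕ) : J → ℤ :=
  fun i => extCoeff (I.map (Embedding.subtype _)) (c _ j) i

theorem restrictCoeff_ne_zero_iff {c : (I : Finset (Fin n)) → ℕ → I → ℤ} {J : Finset (Fin n)}
    {I : Finset J} {j : ℕ} (hc : ∀ i, c (I.map (Embedding.subtype _)) j i ≠ 0) (i : J) :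
    restrictCoeff c J I j i ≠ 0 ↔ i ∈ I := by
  rw [restrictCoeff, extCoeff, ← mem_map' (Embedding.subtype _)]
  split_ifs with h
  · exact iff_of_true (hc _) h
  · exact iff_of_false (not_not.2 rfl) h

theorem extCoeff_eq_mul_of_restrictCoeff_eq_mul {c : (I : Finset (Fin n)) → ℕ → I → ℤ}
    {J : Finset (Fin n)} {I : Finset J} {j j' : ℕ} {q : ℚ}
    (h : ∀ i, (restrictCoeff c J I j i : ℚ) = q * restrictCoeff c J I j' i) (v : Fin n) :
    (extCoeff _ (c (I.map (Embedding.subtype _)) j) v : ℚ) =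
      q * extCoeff _ (c (I.map (Embedding.subtype _)) j') v := by
  by_cases hv : v ∈ J
  · exact h ⟨v, hv⟩
  · have hv' : v ∉ I.map (Embedding.subtype _) := fun h => hv (map_subtype_subset' I h)
    simp [extCoeff, hv']

theorem restrictWeights_eq_prod {ν : ZMod N → ℝ} {νI : (I : Finset (Fin n)) → (I → ZMod N) → ℝ}
    {K : Finset (Fin n) → ℕ} {c : (I : Finset (Fin n)) → ℕ → I → ℤ}
    {b : Finset (Fin n) → ℕ → ZMod N} {J : Finset (Fin n)}
    (hνI : ∀ I ⊆ J,
      νI I = fun x => ∏ j ∈ range (K I), ν (∑ i : I, (c I j i : ZMod N) * x i + b I j))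
    (I : Finset J) (z : J → ZMod N) :
    restrictWeights νI J I (fun i => z i) = ∏ j ∈ range (K (I.map (Embedding.subtype _))),
      ν (∑ i, (restrictCoeff c J I j i : ZMod N) * z i + b (I.map (Embedding.subtype _)) j) := by
  simp only [restrictWeights, hνI _ (map_subtype_subset' I), restrictCoeff,
    sum_extCoeff_mul (map_subtype_subset' I)]

theorem restrictWeights_univ (νI : (I : Finset (Fin n)) → (I → ZMod N) → ℝ) (J : Finset (Fin n))
    (z : J → ZMod N) : νI J z = restrictWeights νI J univ (fun i => z i) := by
  have key : ∀ (I : Finset (Fin n)) (h : I = J), νI J z = νI I fun i => z ⟨i, h ▸ i.2⟩ := by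
    rintro _ rfl
    rfl
  exact key _ (by rw [univ_eq_attach, attach_map_val])

theorem IsIndepWeightSystem.eq_one_or_abs_gowersInner_sub_one_le {d L : ℕ} [NeZero N]
    {ν : ZMod N → ℝ} {νI : (I : Finset (Fin (d + 1))) → (I → ZMod N) → ℝ}
    (hsys : IsIndepWeightSystem d L ν νI) {ε : ℝ}
    (hν : LinearFormsCondition N ν (4 ^ d * (2 * L + 1) ^ (d + 1)) (2 * d) L ε) (hε : 0 ≤ ε)
    {J : Finset (Fin (d + 1))} (hJ : J.card = d) (hd : 1 ≤ d) :
    (∀ z, νI J z = 1) ∨ ∀ S : Finset (J → Bool),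
      |gowersInner (restrictWeights νI J) (fun ω z => if ω ∈ S then νI J z else 1) - 1| ≤ ε := by
  obtain ⟨K, c, b, hνI, hc, hnp⟩ := hsys
  by_cases hKJ : K J = 0
  · left
    simp [hνI J hJ.le, hKJ]
  right
  have hJne : J.Nonempty := card_pos.1 (by omega)
  have : Nonempty J := hJne.to_subtype
  have hsub : ∀ I ⊆ J, I.card ≤ d := fun I hI => (card_le_card hI).trans hJ.le
  -- the zero form of `I = ∅` would be proportional to every form of `ν_J`
  have hK : K ∅ = 0 := by
    by_contra h
    refine hnp ∅ J (by simp) hJ.le 0 (by omega) 0 (by omega) (by simp [hJne.ne_empty.symm])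
      ⟨0, fun i => by simp [extCoeff]⟩
  have hKle : ∀ I, I.card ≤ d → K I ≤ (2 * L + 1) ^ (d + 1) := fun I hI =>
    le_two_mul_add_one_pow_of_injOn (g := fun j => extCoeff I (c I j))
      (fun j hj j' hj' h => by_contra fun hne => hnp I I hI hI j (mem_range.1 hj) j'
        (mem_range.1 hj') (by simpa using hne) ⟨1, fun i => by simpa using congr_fun h i⟩)
      fun j hj => abs_extCoeff_le (hc I hI j hj · |>.2) (Nat.cast_nonneg L)
  intro S
  refine abs_gowersInner_sub_one_le_of_linearFormsCondition (k := fun I => K (I.map _))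
    (v := restrictCoeff c J) hν hε (by simp [hJ]) (by simp [hJ]) (restrictWeights νI J)
    (fun I => b (I.map _)) (restrictWeights_eq_prod fun I hI => hνI I (hsub I hI)) (νI J)
    (restrictWeights_univ νI J) (by simpa using hK)
    (fun I => hKle _ (hsub _ (map_subtype_subset' I)))
    (fun I j hj => restrictCoeff_ne_zero_iff (hc _ (hsub _ (map_subtype_subset' I)) j hj · |>.1))
    (fun I j hj i => abs_extCoeff_le (hc _ (hsub _ (map_subtype_subset' I)) j hj · |>.2)
      (Nat.cast_nonneg L) i)
    (fun I j hj j' hj' hjj ⟨q, hq⟩ => hnp _ _ (hsub _ (map_subtype_subset' I))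
      (hsub _ (map_subtype_subset' I)) j hj j' hj' (by simpa using hjj)
      ⟨q, extCoeff_eq_mul_of_restrictCoeff_eq_mul hq⟩) S

end WeightSystem

theorem weight_minus_one_box_norm_small_general (d L : ℕ) (hd : 1 ≤ d) :
    ∃ m₀ t₀ : ℕ, ∀ η : ℝ, 0 < η → ∃ ε : ℝ, 0 < ε ∧ ∃ N₀ : ℕ,
      ∀ (N : ℕ) [NeZero N], N₀ ≤ N →
      ∀ ν : ZMod N → ℝ, (∀ z, 0 ≤ ν z) → LinearFormsCondition N ν m₀ t₀ L ε →
      ∀ νI : (I : Finset (Fin (d + 1))) → (I → ZMod N) → ℝ,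
        IsIndepWeightSystem d L ν νI →
      ∀ J : Finset (Fin (d + 1)), J.card = d →
        boxNorm (restrictWeights νI J) (fun x => νI J x - 1) ≤ η := by
  refine ⟨4 ^ d * (2 * L + 1) ^ (d + 1), 2 * d, fun η hη =>
    ⟨η ^ 2 ^ d / 2 ^ 2 ^ d, by positivity, 0, fun N _ _ ν _ hν νI hsys J hJ => ?_⟩⟩
  rcases hsys.eq_one_or_abs_gowersInner_sub_one_le hν (by positivity) hJ hd with hJ1 | hS
  · simp [boxNorm, gowersInner, hJ1, hη.le]
  · exact boxNorm_sub_one_le _ _ hη.le (by simpa [hJ] using hS)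

/-- The weight `ν_J` is close to `1` in the weighted box norm. -/
theorem weight_minus_one_box_norm_small (d L : ℕ) (hd : 1 ≤ d) (hL : 1 ≤ L) :
    ∃ m₀ t₀ : ℕ, ∀ η : ℝ, 0 < η → ∃ ε : ℝ, 0 < ε ∧ ∃ N₀ : ℕ,
      ∀ (N : ℕ) [NeZero N], N₀ ≤ N →
      ∀ ν : ZMod N → ℝ, (∀ z, 0 ≤ ν z) → LinearFormsCondition N ν m₀ t₀ L ε →
      ∀ νI : (I : Finset (Fin (d + 1))) → (I → ZMod N) → ℝ,
        IsIndepWeightSystem d L ν νI →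
      ∀ J : Finset (Fin (d + 1)), J.card = d →
        boxNorm (restrictWeights νI J) (fun x => νI J x - 1) ≤ η :=
  weight_minus_one_box_norm_small_general d L hd

end
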